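/- Let K be a finite set, r : K → ℝ with minimum L_r and maximum U_r, α ∈ (0,1), and let X ⊆ ℝ^K be a nonempty compact convex set of probability vectors. Define v(x, y) := Σ_{k ∈ K} x(k)·( y + (1/(1−α))·(r(k) − y)^+ ) for x ∈ X, y ∈ [L_r, U_r]. Then max_{x ∈ X} min_{y ∈ [L_r,U_r]} v(x,y) = min_{y ∈ [L_r,U_r]} max_{x ∈ X} v(x,y), and there exists a saddle point (x*, y*) ∈ X × [L_r,U_r] such that v(x, y*) ≤ v(x*, y*) ≤ v(x*, y) for all x ∈ X and y ∈ [L_r, U_r]. -/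

import Mathlib

/-!
The objective is linear in the weights `x` and, the weights being nonnegative and
`1 / (1 - α) ≥ 0`, convex in the threshold `y`; it is jointly continuous and both strategy
sets are compact and convex. Sion's minimax theorem therefore yields a saddle point, and the
value at a saddle point is both the max-min and the min-max.
-/

open Set

section SaddlePointValue

variable {E F β : Type*} [ConditionallyCompleteLinearOrder β] {X : Set E} {Y : Set F}
  {f : E → F → β} {a : E} {b : F}

theorem IsSaddlePointOn.ciInf_ciSup_eq (h : IsSaddlePointOn X Y f a b) (ha : a ∈ X) (hb : b ∈ Y)
    (hY : ∀ x ∈ X, BddAbove (f x '' Y)) : ⨅ x : X, ⨆ y : Y, f x y = f a b := by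
  have : Nonempty Y := ⟨⟨b, hb⟩⟩
  have hle (x : X) : f a b ≤ ⨆ y : Y, f x y :=
    le_ciSup_of_le (by simpa [image_eq_range] using hY x x.2) ⟨b, hb⟩ (h x x.2 b hb)
  have : Nonempty X := ⟨⟨a, ha⟩⟩
  refine le_antisymm ?_ (le_ciInf hle)
  exact ciInf_le_of_le ⟨f a b, by rintro _ ⟨x, rfl⟩; exact hle x⟩ ⟨a, ha⟩
    (ciSup_le fun y => h a ha y y.2)

theorem IsSaddlePointOn.ciSup_ciInf_eq (h : IsSaddlePointOn X Y f a b) (ha : a ∈ X) (hb : b ∈ Y)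
    (hX : ∀ y ∈ Y, BddBelow ((f · y) '' X)) : ⨆ y : Y, ⨅ x : X, f x y = f a b := by
  have : Nonempty X := ⟨⟨a, ha⟩⟩
  have hle (y : Y) : ⨅ x : X, f x y ≤ f a b :=
    ciInf_le_of_le (by simpa [image_eq_range] using hX y y.2) ⟨a, ha⟩ (h a ha y y.2)
  have : Nonempty Y := ⟨⟨b, hb⟩⟩
  refine le_antisymm (ciSup_le hle) ?_
  exact le_ciSup_of_le ⟨f a b, by rintro _ ⟨y, rfl⟩; exact hle y⟩ ⟨b, hb⟩
    (le_ciInf fun x => h x x.2 b hb)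

end SaddlePointValue

section CvarObjective

variable {K : Type*} [Fintype K] (r : K → ℝ)

/-- With `c = 1 / (1 - α)`, the Rockafellar–Uryasev function `v(x, y)` of the statement. -/
def cvarObjective (c : ℝ) (x : K → ℝ) (y : ℝ) : ℝ :=
  ∑ k, x k * (y + c * max (r k - y) 0)

theorem continuous_cvarObjective (c : ℝ) (x : K → ℝ) : Continuous (cvarObjective r c x) := by
  unfold cvarObjective
  fun_prop

theorem continuous_cvarObjective_right (c y : ℝ) : Continuous fun x => cvarObjective r c x y := by
  unfold cvarObjective
  fun_prop

theorem convexOn_cvarObjective {c : ℝ} (hc : 0 ≤ c) {x : K → ℝ} (hx : 0 ≤ x) :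
    ConvexOn ℝ univ (cvarObjective r c x) := by
  have hterm (k : K) : ConvexOn ℝ univ fun y => y + c * max (r k - y) 0 :=
    (convexOn_id convex_univ).add
      ((((convexOn_const (r k) convex_univ).sub (concaveOn_id convex_univ)).sup
        (convexOn_const 0 convex_univ)).smul hc)
  have hsum := Finset.sum_induction (s := Finset.univ)
    (fun k y => x k * (y + c * max (r k - y) 0)) (ConvexOn ℝ univ)
    (fun _ _ => ConvexOn.add) (convexOn_const 0 convex_univ) fun k _ => (hterm k).smul (hx k)
  convert hsum using 1
  ext y
  simp [cvarObjective]

theorem concaveOn_cvarObjective_right (c : ℝ) {X : Set (K → ℝ)} (hX : Convex ℝ X)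
    (y : ℝ) :
    ConcaveOn ℝ X fun x => cvarObjective r c x y := by
  have hlin : IsLinearMap ℝ fun x => cvarObjective r c x y := by
    constructor <;> intros <;>
      simp only [cvarObjective, Pi.add_apply, Pi.smul_apply, smul_eq_mul, add_mul,
        Finset.sum_add_distrib, Finset.mul_sum, mul_assoc]
  exact (hlin.mk' _).concaveOn hX

/-- Mathlib's `IsSaddlePointOn` lists the minimizing variable, here the threshold, first. -/
theorem exists_isSaddlePointOn_cvarObjective {c : ℝ} (hc : 0 ≤ c)
    {T : Set ℝ} (hTne : T.Nonempty) (hTc : IsCompact T) (hTconv : Convex ℝ T)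
    {X : Set (K → ℝ)} (hXne : X.Nonempty) (hXc : IsCompact X) (hXconv : Convex ℝ X)
    (hX : ∀ x ∈ X, 0 ≤ x) :
    ∃ y ∈ T, ∃ x ∈ X, IsSaddlePointOn T X (fun y x => cvarObjective r c x y) y x :=
  Sion.exists_isSaddlePointOn hTne hTconv hTc
    (fun x _ => (continuous_cvarObjective r c x).continuousOn.lowerSemicontinuousOn)
    (fun x hx =>
      ((convexOn_cvarObjective r hc (hX x hx)).subset (subset_univ T) hTconv).quasiconvexOn)
    hXconv hXne hXc
    (fun y _ => (continuous_cvarObjective_right r c y).continuousOn.upperSemicontinuousOn)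
    (fun y _ => (concaveOn_cvarObjective_right r c hXconv y).quasiconcaveOn)

end CvarObjective

theorem cvar_minimax_saddle_general {K : Type*} [Fintype K]
    (r : K → ℝ) (L U : ℝ)
    (hL : IsLeast (Set.range r) L) (hU : IsGreatest (Set.range r) U)
    (α : ℝ) (hα : α ∈ Set.Ioo (0 : ℝ) 1)
    (X : Set (K → ℝ)) (hXne : X.Nonempty) (hXc : IsCompact X)
    (hXconv : Convex ℝ X)
    (hXprob : ∀ x ∈ X, (∀ k, 0 ≤ x k) ∧ ∑ k, x k = 1) :
    (⨆ x : X, ⨅ y : Set.Icc L U,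
        ∑ k, (x : K → ℝ) k * ((y : ℝ) + (1 / (1 - α)) * max (r k - y) 0)) =
      (⨅ y : Set.Icc L U, ⨆ x : X,
        ∑ k, (x : K → ℝ) k * ((y : ℝ) + (1 / (1 - α)) * max (r k - y) 0)) ∧
    ∃ xs ∈ X, ∃ ys ∈ Set.Icc L U,
      (∀ x ∈ X, ∑ k, x k * (ys + (1 / (1 - α)) * max (r k - ys) 0) ≤
        ∑ k, xs k * (ys + (1 / (1 - α)) * max (r k - ys) 0)) ∧
      (∀ y ∈ Set.Icc L U, ∑ k, xs k * (ys + (1 / (1 - α)) * max (r k - ys) 0) ≤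
        ∑ k, xs k * (y + (1 / (1 - α)) * max (r k - y) 0)) := by
  have hc : 0 ≤ 1 / (1 - α) := one_div_nonneg.2 (sub_nonneg.2 hα.2.le)
  obtain ⟨ys, hys, xs, hxs, hsaddle⟩ := exists_isSaddlePointOn_cvarObjective r hc
    (nonempty_Icc.2 (hU.2 hL.1)) isCompact_Icc (convex_Icc L U) hXne hXc hXconv
    fun x hx => (hXprob x hx).1
  refine ⟨?_, xs, hxs, ys, hys, fun x hx => hsaddle ys hys x hx,
    fun y hy => hsaddle y hy xs hxs⟩
  refine (hsaddle.ciSup_ciInf_eq hys hxs fun x _ => ?_).trans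
    (hsaddle.ciInf_ciSup_eq hys hxs fun y _ => ?_).symm
  · exact isCompact_Icc.bddBelow_image (continuous_cvarObjective r _ x).continuousOn
  · exact hXc.bddAbove_image (continuous_cvarObjective_right r _ y).continuousOn

theorem cvar_minimax_saddle {K : Type*} [Fintype K] [Nonempty K]
    (r : K → ℝ) (L U : ℝ)
    (hL : IsLeast (Set.range r) L) (hU : IsGreatest (Set.range r) U)
    (α : ℝ) (hα : α ∈ Set.Ioo (0 : ℝ) 1)
    (X : Set (K → ℝ)) (hXne : X.Nonempty) (hXc : IsCompact X)
    (hXconv : Convex ℝ X)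
    (hXprob : ∀ x ∈ X, (∀ k, 0 ≤ x k) ∧ ∑ k, x k = 1) :
    (⨆ x : X, ⨅ y : Set.Icc L U,
        ∑ k, (x : K → ℝ) k * ((y : ℝ) + (1 / (1 - α)) * max (r k - y) 0)) =
      (⨅ y : Set.Icc L U, ⨆ x : X,
        ∑ k, (x : K → ℝ) k * ((y : ℝ) + (1 / (1 - α)) * max (r k - y) 0)) ∧
    ∃ xs ∈ X, ∃ ys ∈ Set.Icc L U,
      (∀ x ∈ X, ∑ k, x k * (ys + (1 / (1 - α)) * max (r k - ys) 0) ≤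
        ∑ k, xs k * (ys + (1 / (1 - α)) * max (r k - ys) 0)) ∧
      (∀ y ∈ Set.Icc L U, ∑ k, xs k * (ys + (1 / (1 - α)) * max (r k - ys) 0) ≤
        ∑ k, xs k * (y + (1 / (1 - α)) * max (r k - y) 0)) :=
  cvar_minimax_saddle_general r L U hL hU α hα X hXne hXc hXconv hXprob
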